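/- Let E and F be cartesian closed categories with finite limits, and let f_! ⊣ f^* ⊣ f_* be an adjoint triple with f^* : E ⥤ F preserving finite limits and cartesian closed. Then for all objects Y and B of E, every object X of F and every morphism x : X ⟶ f^*(B), the comparison map θ for the product projection π : Y ⨯ B ⟶ B, namely f_!(X ×_{f^*(B)} f^*(Y ⨯ B)) ⟶ f_!(X) ×_B (Y ⨯ B), is an isomorphism. -/

import Mathlib

open CategoryTheory CategoryTheory.Limits

/-- A subobject classifier for a category `C` with a terminal object:
an object `Ω` together with a "truth" arrow `⊤_ C ⟶ Ω` such that every
monomorphism arises as the pullback of `truth` along a unique classifying map. -/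
structure Classifier (C : Type*) [Category C] [HasTerminal C] where
  Ω : C
  truth : ⊤_ C ⟶ Ω
  χ : ∀ {U A : C} (m : U ⟶ A) [Mono m], A ⟶ Ω
  isPullback : ∀ {U A : C} (m : U ⟶ A) [Mono m],
    IsPullback m (terminal.from U) (χ m) truth
  uniq : ∀ {U A : C} (m : U ⟶ A) [Mono m] (χ' : A ⟶ Ω),
    IsPullback m (terminal.from U) χ' truth → χ' = χ m

/-- `C` has a subobject classifier. -/
class HasClassifier (C : Type*) [Category C] [HasTerminal C] : Prop where
  nonempty : Nonempty (_root_.Classifier C)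

/-- Given an adjunction `fShriek ⊣ fStar` (thought of as `f_! ⊣ f^*` for an essential
geometric morphism `f`), a morphism `a : A ⟶ B` in the codomain, an object `X` of the
domain and a morphism `x : X ⟶ f^* B`, this is the comparison map
`θ : f_!(X ×_{f^* B} f^* A) ⟶ f_!(X) ×_B A`, whose first component is `f_!` of the first
pullback projection, and whose second component is `f_!` of the second pullback projection
followed by the counit `f_!(f^* A) ⟶ A`.  Here `f_!(X) ⟶ B` is the adjunct of `x`.
The geometric morphism `f` is locally connected precisely if all these maps are
isomorphisms. -/
noncomputable def thetaMap {F : Type*} {E : Type*} [Category F] [Category E]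
    [HasPullbacks E] [HasPullbacks F]
    (fShriek : F ⥤ E) (fStar : E ⥤ F) (adj : fShriek ⊣ fStar)
    {A B : E} (a : A ⟶ B) (X : F) (x : X ⟶ fStar.obj B) :
    fShriek.obj (pullback x (fStar.map a)) ⟶ pullback ((adj.homEquiv X B).symm x) a :=
  pullback.lift (fShriek.map (pullback.fst x (fStar.map a)))
    (fShriek.map (pullback.snd x (fStar.map a)) ≫ adj.counit.app A)
    (by
      have h := adj.counit.naturality a
      simp only [Functor.comp_map, Functor.id_map] at h
      rw [Adjunction.homEquiv_counit, ← Functor.map_comp_assoc, pullback.condition,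
        Functor.map_comp_assoc, Category.assoc, ← h])

universe v u₁ u₂

/-!
A commuting square over a product projection `Y ⨯ B ⟶ B` is a pullback exactly when its apex,
with its maps to `Y` and to the opposite corner, is a product. Since `f^*` preserves products,
`X ×_{f^*B} f^*(Y ⨯ B)` is therefore a product of `f^*Y` and `X`. Cartesian closedness of `f^*`
is Frobenius reciprocity `f_!(f^*Y × X) ≅ Y × f_!X`, so `f_!` turns this product into a product
of `Y` and `f_!X`, and the square defining `θ` is a pullback.
-/

theorem isPullback_snd_iff_isLimit_binaryFan {C : Type*} [Category C] [HasTerminal C]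
    {Y B T : C} {π₁ : T ⟶ Y} {π₂ : T ⟶ B} (hT : IsLimit (BinaryFan.mk π₁ π₂))
    {W P : C} {p : W ⟶ P} {q : W ⟶ T} {g : P ⟶ B} (w : p ≫ g = q ≫ π₂) :
    IsPullback p q g π₂ ↔ Nonempty (IsLimit (BinaryFan.mk (q ≫ π₁) p)) := by
  have bottom : IsPullback π₂ π₁ (terminal.from B) (terminal.from Y) :=
    (IsPullback.of_is_product' hT terminalIsTerminal).flip
  rw [← IsPullback.paste_vert_iff bottom w, terminal.comp_from]
  exact ⟨fun h ↦ ⟨isProductOfIsTerminalIsPullback _ _ _ _ terminalIsTerminal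
    h.flip.isLimit⟩, fun ⟨h⟩ ↦ (IsPullback.of_is_product' h terminalIsTerminal).flip⟩

open CartesianMonoidalCategory in
noncomputable def isLimitFrobeniusFan {C D : Type*} [Category C] [Category D]
    [CartesianMonoidalCategory C] [CartesianMonoidalCategory D] {R : C ⥤ D} {L : D ⥤ C}
    (adj : L ⊣ R) (A : C) [IsIso (frobeniusMorphism R adj A).natTrans] {X T : D}
    {π₁ : T ⟶ R.obj A} {π₂ : T ⟶ X} (hT : IsLimit (BinaryFan.mk π₁ π₂)) :
    IsLimit (BinaryFan.mk (L.map π₁ ≫ adj.counit.app A) (L.map π₂)) :=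
  let e := hT.conePointUniqueUpToIso (tensorProductIsBinaryProduct (R.obj A) X)
  have he₁ : e.hom ≫ fst (R.obj A) X = π₁ := hT.conePointUniqueUpToIso_hom_comp _ ⟨.left⟩
  have he₂ : e.hom ≫ snd (R.obj A) X = π₂ :=
    hT.conePointUniqueUpToIso_hom_comp _ ⟨.right⟩
  IsLimit.ofIsoLimit (tensorProductIsBinaryProduct A (L.obj X))
    (BinaryFan.ext (L.mapIso e ≪≫ asIso ((frobeniusMorphism R adj A).natTrans.app X))
      (by simp [frobeniusMorphism, ← he₁])
      (by simp [frobeniusMorphism, ← he₂])).symm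

section Theta

variable {F E : Type*} [Category F] [Category E] [HasPullbacks E] [HasPullbacks F]
  {fShriek : F ⥤ E} {fStar : E ⥤ F} (adj : fShriek ⊣ fStar)
  {A B : E} (a : A ⟶ B) (X : F) (x : X ⟶ fStar.obj B)

theorem commSq_thetaMap :
    CommSq (fShriek.map (pullback.fst x (fStar.map a)))
      (fShriek.map (pullback.snd x (fStar.map a)) ≫ adj.counit.app A)
      ((adj.homEquiv X B).symm x) a := by
  have h := thetaMap fShriek fStar adj a X x ≫= pullback.condition
  rw [thetaMap, pullback.lift_fst_assoc, pullback.lift_snd_assoc] at h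
  exact ⟨h⟩

theorem isIso_thetaMap_of_isPullback
    (h : IsPullback (fShriek.map (pullback.fst x (fStar.map a)))
      (fShriek.map (pullback.snd x (fStar.map a)) ≫ adj.counit.app A)
      ((adj.homEquiv X B).symm x) a) :
    IsIso (thetaMap fShriek fStar adj a X x) := by
  have : thetaMap fShriek fStar adj a X x = h.isoPullback.hom := by
    apply pullback.hom_ext
    · rw [thetaMap, pullback.lift_fst, h.isoPullback_hom_fst]
    · rw [thetaMap, pullback.lift_snd, h.isoPullback_hom_snd]
  rw [this]
  infer_instance

end Theta

theorem theta_isIso_of_prod_projection_general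
    {E : Type u₁} [Category.{v} E] [HasFiniteLimits E]
    [CartesianMonoidalCategory E] [MonoidalClosed E]
    {F : Type u₂} [Category.{v} F] [HasFiniteLimits F]
    [CartesianMonoidalCategory F] [MonoidalClosed F]
    (fShriek : F ⥤ E) (fStar : E ⥤ F)
    [PreservesFiniteLimits fStar] [MonoidalClosedFunctor fStar]
    (adj₁ : fShriek ⊣ fStar)
    (Y B : E) (X : F) (x : X ⟶ fStar.obj B) :
    IsIso (thetaMap fShriek fStar adj₁ (prod.snd : Y ⨯ B ⟶ B) X x) := by
  have hStarProd :
      IsLimit (BinaryFan.mk (fStar.map (prod.fst : Y ⨯ B ⟶ Y)) (fStar.map prod.snd)) :=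
    mapIsLimitOfPreservesOfIsLimit fStar _ _ (prodIsProd Y B)
  obtain ⟨hPullbackProd⟩ :=
    (isPullback_snd_iff_isLimit_binaryFan hStarProd pullback.condition).1
      (IsPullback.of_hasPullback x (fStar.map prod.snd))
  have := frobeniusMorphism_iso_of_expComparison_iso fStar adj₁ Y
  apply isIso_thetaMap_of_isPullback
  refine (isPullback_snd_iff_isLimit_binaryFan (prodIsProd Y B)
    (commSq_thetaMap adj₁ _ X x).w).2 ⟨(isLimitFrobeniusFan adj₁ Y hPullbackProd).ofIsoLimit
      (BinaryFan.ext (Iso.refl _) (by simp) (by simp))⟩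

/-- Let `E` and `F` be cartesian closed categories with finite limits,
and `f_! ⊣ f^* ⊣ f_*` an adjoint triple with `f^* : E ⥤ F` preserving finite limits and
cartesian closed.  Then for all objects `Y, B` of `E`, every object `X` of `F` and every
`x : X ⟶ f^* B`, the comparison map `θ` for the product projection `π : Y ⨯ B ⟶ B`,
namely `f_!(X ×_{f^* B} f^*(Y ⨯ B)) ⟶ f_!(X) ×_B (Y ⨯ B)`, is an isomorphism. -/
theorem theta_isIso_of_prod_projection
    {E : Type u₁} [Category.{v} E] [HasFiniteLimits E]
    [CartesianMonoidalCategory E] [MonoidalClosed E]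
    {F : Type u₂} [Category.{v} F] [HasFiniteLimits F]
    [CartesianMonoidalCategory F] [MonoidalClosed F]
    (fShriek : F ⥤ E) (fStar : E ⥤ F) (fPush : F ⥤ E)
    [PreservesFiniteLimits fStar] [MonoidalClosedFunctor fStar]
    (adj₁ : fShriek ⊣ fStar) (adj₂ : fStar ⊣ fPush)
    (Y B : E) (X : F) (x : X ⟶ fStar.obj B) :
    IsIso (thetaMap fShriek fStar adj₁ (prod.snd : Y ⨯ B ⟶ B) X x) :=
  theta_isIso_of_prod_projection_general fShriek fStar adj₁ Y B X x
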